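/- The negative part of log|f′| is not integrable with respect to μ̃_P: ∫ max{0, −log|f′(x)|} dμ̃_P(x) = +∞. Combined with the divergence ∫ max{0, log|f′(x)|} dμ̃_P(x) = +∞, this shows that the Lyapunov exponent χ_{μ̃_P}(f) = ∫ log|f′| dμ̃_P is not defined, even as a value in [−∞, +∞]. -/

import Mathlib

/-!
Write `b m = |c_{S(m)}|` for the closest-return distances of the critical orbit. The kneading
combinatorics give `b m + b (m + 2) = λ ^ S(m) * b (m + 1)`, so the gap
`log b m - log b (m + 1)` is about `S(m) log λ`. Every orbit time lies within `S(m + 1)` of a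
Zeckendorf sum of `S(i)`, `i ≥ m`, and at those times the orbit is in `[-b m, b m]`; by invariance
`μ_P [-b m, b m] ≥ 1 / (S(m + 1) + 1)`. Summing gap times mass over the layers gives
`∫ -log |x| dμ_P = ∞`.

For `f = h ∘ T ∘ h⁻¹` the chain rule gives `|f'(h u)| = |h'(T u)| λ / |h'(u)|`. When `T u` is near
the critical point, `u` stays away from it, so `|h'(u)|` is bounded below while
`|h'(T u)| ≤ e^M |T u|^α`. Hence `-log |f'(h u)| ≥ α (-log |T u|) - C`, and the `T`-invariance of
`μ_P` carries the divergence over to `h_* μ_P`.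
-/

open MeasureTheory Filter Set Topology
open Nat (fib)
open scoped ENNReal

noncomputable section

def tent (lam x : ℝ) : ℝ := lam * (1 - |x|) - 1

def tentOrbit (lam : ℝ) (n : ℕ) : ℝ := (tent lam)^[n] 0

def returnDist (lam : ℝ) (m : ℕ) : ℝ := |tentOrbit lam (fib (m + 2))|

end

lemma abs_le_of_mem_uIcc {p q x r : ℝ} (hx : x ∈ uIcc p q) (hp : |p| ≤ r) (hq : |q| ≤ r) :
    |x| ≤ r := by
  rw [abs_le] at hp hq ⊢
  rcases mem_uIcc.1 hx with h | h <;> constructor <;> linarith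

lemma half_log_le_log_sub_one {x : ℝ} (hx : 4 ≤ x) : Real.log x / 2 ≤ Real.log (x - 1) := by
  have h : Real.log x ≤ Real.log ((x - 1) ^ 2) := Real.log_le_log (by linarith) (by nlinarith)
  rw [Real.log_pow] at h
  push_cast at h
  linarith

lemma inv_natCast_le_measure_of_subset_biUnion {α : Type*} [MeasurableSpace α] {μ : Measure α}
    [IsProbabilityMeasure μ] {T : α → α} (hT : MeasurePreserving T μ μ) {K B : Set α}
    (hK : μ Kᶜ = 0) (hB : MeasurableSet B) {N : ℕ}
    (hcover : K ⊆ ⋃ i ∈ Finset.range N, T^[i] ⁻¹' B) : (N : ℝ≥0∞)⁻¹ ≤ μ B := by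
  have hone : 1 ≤ μ K := by
    calc 1 = μ (K ∪ Kᶜ) := by rw [union_compl_self, measure_univ]
      _ ≤ μ K + μ Kᶜ := measure_union_le _ _
      _ = μ K := by rw [hK, add_zero]
  have hsum : μ K ≤ N * μ B := by
    calc μ K ≤ ∑ i ∈ Finset.range N, μ (T^[i] ⁻¹' B) :=
          (measure_mono hcover).trans (measure_biUnion_finset_le _ _)
      _ = N * μ B := by
          simp [(hT.iterate _).measure_preimage hB.nullMeasurableSet]
  rw [ENNReal.inv_le_iff_le_mul (fun h => absurd h (measure_ne_top μ B))
    (fun h => absurd h (ENNReal.natCast_ne_top N))]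
  exact hone.trans hsum

section LayerCake

variable {b : ℕ → ℝ}

lemma sum_indicator_log_sub_le (hb : Antitone b) (hpos : ∀ n, 0 < b n) (v : ℝ) (N : ℕ) :
    ∑ k ∈ Finset.range N, (Icc (-b (k + 1)) (b (k + 1))).indicator
        (fun _ => Real.log (b k) - Real.log (b (k + 1))) v
      ≤ Real.log (max |v| (b 0)) - Real.log (max |v| (b N)) := by
  induction N with
  | zero => simp
  | succ N ih =>
    rw [Finset.sum_range_succ]
    by_cases hv : |v| ≤ b (N + 1)
    · rw [indicator_of_mem (mem_Icc.2 (abs_le.1 hv)), max_eq_right hv]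
      rw [max_eq_right (hv.trans (hb N.le_succ))] at ih
      linarith
    · have hv' : v ∉ Icc (-b (N + 1)) (b (N + 1)) := fun h => hv (abs_le.2 h)
      rw [indicator_of_notMem hv']
      have : Real.log (max |v| (b (N + 1))) ≤ Real.log (max |v| (b N)) :=
        Real.log_le_log (lt_max_of_lt_right (hpos _)) (max_le_max le_rfl (hb N.le_succ))
      linarith

lemma log_max_sub_log_max_le {v : ℝ} (hv : v ≠ 0) (N : ℕ) :
    Real.log (max |v| (b 0)) - Real.log (max |v| (b N))
      ≤ max (Real.log (b 0) - Real.log |v|) 0 := by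
  have h : Real.log |v| ≤ Real.log (max |v| (b N)) :=
    Real.log_le_log (abs_pos.2 hv) (le_max_left _ _)
  rcases le_total |v| (b 0) with h0 | h0
  · rw [max_eq_right h0]; exact le_max_of_le_left (by linarith)
  · rw [max_eq_left h0]; exact le_max_of_le_right (by linarith)

lemma tsum_indicator_ofReal_log_sub_le (hb : Antitone b) (hpos : ∀ n, 0 < b n) {v : ℝ}
    (hv : v ≠ 0) :
    ∑' k, (Icc (-b (k + 1)) (b (k + 1))).indicator
        (fun _ => ENNReal.ofReal (Real.log (b k) - Real.log (b (k + 1)))) v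
      ≤ ENNReal.ofReal (-Real.log |v|) + ENNReal.ofReal (Real.log (b 0)) := by
  refine ENNReal.tsum_le_of_sum_range_le fun N => ?_
  have hw (k : ℕ) : 0 ≤ Real.log (b k) - Real.log (b (k + 1)) :=
    sub_nonneg.2 (Real.log_le_log (hpos _) (hb k.le_succ))
  calc _ = ENNReal.ofReal (∑ k ∈ Finset.range N, (Icc (-b (k + 1)) (b (k + 1))).indicator
            (fun _ => Real.log (b k) - Real.log (b (k + 1))) v) := by
        rw [ENNReal.ofReal_sum_of_nonneg fun k _ => indicator_nonneg (fun _ _ => hw k) v]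
        exact Finset.sum_congr rfl fun k _ =>
          congrFun (indicator_comp_of_zero ENNReal.ofReal_zero) v
    _ ≤ ENNReal.ofReal (max (Real.log (b 0) - Real.log |v|) 0) :=
        ENNReal.ofReal_le_ofReal ((sum_indicator_log_sub_le hb hpos v N).trans
          (log_max_sub_log_max_le hv N))
    _ ≤ ENNReal.ofReal (-Real.log |v|) + ENNReal.ofReal (Real.log (b 0)) := by
        rw [ENNReal.ofReal_max, ENNReal.ofReal_zero, max_eq_left zero_le, sub_eq_neg_add]
        exact ENNReal.ofReal_add_le

lemma lintegral_ofReal_neg_log_abs_eq_top {μ : Measure ℝ} [IsFiniteMeasure μ] (hμ0 : μ {0} = 0)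
    (hb : Antitone b) (hpos : ∀ n, 0 < b n)
    (hdiv : ∑' k, ENNReal.ofReal (Real.log (b k) - Real.log (b (k + 1))) *
      μ (Icc (-b (k + 1)) (b (k + 1))) = ∞) :
    ∫⁻ v, ENNReal.ofReal (-Real.log |v|) ∂μ = ∞ := by
  have hle : ∞ ≤ ∫⁻ v, ENNReal.ofReal (-Real.log |v|) ∂μ
      + ENNReal.ofReal (Real.log (b 0)) * μ univ := by
    calc ∞ = ∑' k, ∫⁻ v, (Icc (-b (k + 1)) (b (k + 1))).indicator
            (fun _ => ENNReal.ofReal (Real.log (b k) - Real.log (b (k + 1)))) v ∂μ := by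
          rw [← hdiv]
          exact tsum_congr fun k => (lintegral_indicator_const measurableSet_Icc _).symm
      _ = ∫⁻ v, ∑' k, (Icc (-b (k + 1)) (b (k + 1))).indicator
            (fun _ => ENNReal.ofReal (Real.log (b k) - Real.log (b (k + 1)))) v ∂μ :=
          (lintegral_tsum fun k => (measurable_const.indicator measurableSet_Icc).aemeasurable).symm
      _ ≤ ∫⁻ v, (ENNReal.ofReal (-Real.log |v|) + ENNReal.ofReal (Real.log (b 0))) ∂μ := by
          refine lintegral_mono_ae ?_
          filter_upwards [compl_mem_ae_iff.2 hμ0] with v hv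
          exact tsum_indicator_ofReal_log_sub_le hb hpos hv
      _ = _ := by rw [lintegral_add_right _ measurable_const, lintegral_const]
  exact (ENNReal.add_eq_top.1 (top_le_iff.1 hle)).resolve_right
    (ENNReal.mul_ne_top ENNReal.ofReal_ne_top (measure_ne_top μ univ))

end LayerCake

lemma lintegral_ofReal_mul_sub_eq_top {α : Type*} [MeasurableSpace α] {μ : Measure α}
    [IsFiniteMeasure μ] {g : α → ℝ} (hg : ∫⁻ x, ENNReal.ofReal (g x) ∂μ = ∞) {a : ℝ} (ha : 0 < a)
    (C : ℝ) : ∫⁻ x, ENNReal.ofReal (a * g x - C) ∂μ = ∞ := by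
  have hle : ∞ ≤ ∫⁻ x, ENNReal.ofReal (a * g x - C) ∂μ + ENNReal.ofReal C * μ univ := by
    calc ∞ = ENNReal.ofReal a * ∫⁻ x, ENNReal.ofReal (g x) ∂μ := by
          rw [hg, ENNReal.mul_top (ENNReal.ofReal_pos.2 ha).ne']
      _ = ∫⁻ x, ENNReal.ofReal (a * g x) ∂μ := by
          rw [← lintegral_const_mul' _ _ ENNReal.ofReal_ne_top]
          simp only [← ENNReal.ofReal_mul ha.le]
      _ ≤ ∫⁻ x, (ENNReal.ofReal (a * g x - C) + ENNReal.ofReal C) ∂μ :=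
          lintegral_mono fun x => (ENNReal.ofReal_le_ofReal (by linarith)).trans
            ENNReal.ofReal_add_le
      _ = _ := by rw [lintegral_add_right _ measurable_const, lintegral_const]
  exact (ENNReal.add_eq_top.1 (top_le_iff.1 hle)).resolve_right
    (ENNReal.mul_ne_top ENNReal.ofReal_ne_top (measure_ne_top μ univ))

lemma StrictMonoOn.mapsTo_Ioo_of_mapsTo_Icc {h : ℝ → ℝ} {a b : ℝ} (hmono : StrictMonoOn h (Icc a b))
    (hmaps : MapsTo h (Icc a b) (Icc a b)) : MapsTo h (Ioo a b) (Ioo a b) := fun u hu => by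
  have hab : a ≤ b := hu.1.le.trans hu.2.le
  have hu' := hmono.mapsTo_Ioo hu
  exact ⟨(hmaps (left_mem_Icc.2 hab)).1.trans_lt hu'.1,
    hu'.2.trans_le (hmaps (right_mem_Icc.2 hab)).2⟩

lemma continuousAt_of_leftInvOn_of_strictMonoOn {h hinv : ℝ → ℝ} {a b u : ℝ}
    (hmono : StrictMonoOn h (Icc a b)) (hbij : BijOn h (Icc a b) (Icc a b))
    (hinvl : ∀ x ∈ Icc a b, hinv (h x) = x) (hu : u ∈ Ioo a b) :
    ContinuousAt hinv (h u) := by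
  have huIcc : u ∈ Icc a b := Ioo_subset_Icc_self hu
  have hinv_mono : MonotoneOn hinv (Icc a b) := by
    intro y₁ hy₁ y₂ hy₂ hy
    obtain ⟨x₁, hx₁, rfl⟩ := hbij.surjOn hy₁
    obtain ⟨x₂, hx₂, rfl⟩ := hbij.surjOn hy₂
    rwa [hinvl x₁ hx₁, hinvl x₂ hx₂, ← hmono.le_iff_le hx₁ hx₂]
  have hhu : h u ∈ Ioo a b := hmono.mapsTo_Ioo_of_mapsTo_Icc hbij.mapsTo hu
  refine continuousAt_of_monotoneOn_of_image_mem_nhds hinv_mono (Icc_mem_nhds hhu.1 hhu.2) ?_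
  rw [hinvl u huIcc]
  refine mem_of_superset (Icc_mem_nhds hu.1 hu.2) fun x hx => ⟨h x, hbij.mapsTo hx, hinvl x hx⟩

lemma HasDerivAt.conjugate {h hinv g : ℝ → ℝ} {u h'u h'gu g'u : ℝ} (hh : HasDerivAt h h'u u)
    (hhg : HasDerivAt h h'gu (g u)) (hg : HasDerivAt g g'u u) (hinvc : ContinuousAt hinv (h u))
    (hleft : hinv (h u) = u) (hright : ∀ᶠ y in 𝓝 (h u), h (hinv y) = y) (hne : h'u ≠ 0) :
    HasDerivAt (fun y => h (g (hinv y))) (h'gu * g'u / h'u) (h u) := by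
  have hinvd : HasDerivAt hinv h'u⁻¹ (h u) :=
    HasDerivAt.of_local_left_inverse hinvc (by rwa [hleft]) hne hright
  rw [← hleft] at hg hhg
  rw [div_eq_mul_inv, mul_assoc]
  exact hhg.comp (h u) (hg.comp (h u) hinvd)

lemma log_abs_le_of_nonflat {h' : ℝ → ℝ} {αp αm M δ : ℝ}
    (hnfp : ∀ x ∈ Ioo (0 : ℝ) δ, Real.exp (-M) * x ^ αp ≤ h' x ∧ h' x ≤ Real.exp M * x ^ αp)
    (hnfm : ∀ x ∈ Ioo (-δ) (0 : ℝ),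
      Real.exp (-M) * |x| ^ αm ≤ h' x ∧ h' x ≤ Real.exp M * |x| ^ αm)
    {x : ℝ} (hx0 : x ≠ 0) (hxδ : |x| < δ) (hx1 : |x| < 1) :
    Real.log |h' x| ≤ M + min αp αm * Real.log |x| := by
  have hx : 0 < |x| := abs_pos.2 hx0
  obtain ⟨α, hα, hlo, hhi⟩ : ∃ α, min αp αm ≤ α ∧
      Real.exp (-M) * |x| ^ α ≤ h' x ∧ h' x ≤ Real.exp M * |x| ^ α := by
    rcases hx0.lt_or_gt with hneg | hpos
    · rw [abs_of_neg hneg] at hxδ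
      exact ⟨αm, min_le_right _ _, hnfm x ⟨by linarith, hneg⟩⟩
    · rw [abs_of_pos hpos] at hxδ ⊢
      exact ⟨αp, min_le_left _ _, hnfp x ⟨hpos, hxδ⟩⟩
  have hpos : 0 < h' x := lt_of_lt_of_le (by positivity) hlo
  have hlog := Real.log_le_log hpos hhi
  rw [Real.log_mul (Real.exp_pos M).ne' (Real.rpow_pos_of_pos hx α).ne', Real.log_exp,
    Real.log_rpow hx] at hlog
  rw [abs_of_pos hpos]
  have := mul_le_mul_of_nonpos_right hα (Real.log_neg hx hx1).le
  linarith

lemma fib_add_fib (m : ℕ) : fib (m + 2) + fib (m + 3) = fib (m + 4) := Nat.fib_add_two.symm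

lemma fib_add_four_add_one_le (m : ℕ) : fib (m + 4) + 1 ≤ 4 * fib (m + 2) := by
  have h3 : fib (m + 3) = fib (m + 1) + fib (m + 2) := Nat.fib_add_two
  have h4 : fib (m + 4) = fib (m + 2) + fib (m + 3) := Nat.fib_add_two
  have h1 : fib (m + 1) ≤ fib (m + 2) := Nat.fib_le_fib_succ
  have h0 : 1 ≤ fib (m + 1) := Nat.fib_pos.2 (by omega)
  omega

lemma eq_fib_of_rec {S : ℤ → ℕ} (hSm2 : S (-2) = 0) (hSm1 : S (-1) = 1)
    (hSrec : ∀ k : ℤ, 0 ≤ k → S k = S (k - 1) + S (k - 2)) (m : ℕ) : S m = fib (m + 2) := by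
  induction m using Nat.strong_induction_on with
  | _ m ih =>
  match m, ih with
  | 0, _ => simpa [hSm1, hSm2] using hSrec 0 le_rfl
  | 1, ih =>
    have h0 : S 0 = 1 := by simpa using ih 0 one_pos
    simpa [hSm1, h0, Nat.fib_add_two] using hSrec 1 zero_le_one
  | m + 2, ih =>
    have h := hSrec ((m + 2 : ℕ) : ℤ) (by positivity)
    rw [show ((m + 2 : ℕ) : ℤ) - 1 = ((m + 1 : ℕ) : ℤ) by push_cast; ring,
      show ((m + 2 : ℕ) : ℤ) - 2 = (m : ℤ) by push_cast; ring, ih (m + 1) (by omega),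
      ih m (by omega)] at h
    rw [h, Nat.fib_add_two (n := m + 2)]
    ring

/-- `FibSum m n`: `n` is a sum of numbers `fib (i + 2)` with indices `i ≥ m` pairwise at least
two apart (a Zeckendorf representation avoiding the smallest terms). -/
inductive FibSum : ℕ → ℕ → Prop
  | zero (m : ℕ) : FibSum m 0
  | add {m i n : ℕ} : m ≤ i → FibSum (i + 2) n → FibSum m (fib (i + 2) + n)

namespace FibSum

lemma mono {m m' n : ℕ} (h : FibSum m n) (hm : m' ≤ m) : FibSum m' n := by
  cases h with
  | zero => exact .zero m'
  | add hi hn => exact .add (hm.trans hi) hn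

lemma fib_add {i n : ℕ} (h : FibSum (i + 1) n) : FibSum i (fib (i + 2) + n) := by
  induction n using Nat.strong_induction_on generalizing i with
  | _ n ih =>
  cases h with
  | zero => exact .add le_rfl (.zero _)
  | @add _ j n hj hn =>
    rcases hj.eq_or_lt with rfl | hlt
    · rw [← add_assoc, fib_add_fib]
      have hlt : n < fib (i + 1 + 2) + n := by
        have := Nat.fib_pos.2 (by omega : 0 < i + 1 + 2); omega
      exact (ih n hlt hn).mono (by omega)
    · exact .add le_rfl (.add (by omega) hn)

lemma exists_add {m n : ℕ} (h : FibSum m n) :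
    ∃ d, 1 ≤ d ∧ d ≤ fib (m + 3) ∧ FibSum m (n + d) := by
  have hpos := Nat.fib_pos.2 (by omega : 0 < m + 2)
  have hle : fib (m + 2) ≤ fib (m + 3) := Nat.fib_mono (by omega)
  cases h with
  | zero => exact ⟨fib (m + 2), hpos, hle, by simpa using FibSum.add le_rfl (.zero (m + 2))⟩
  | @add _ i n hi hn =>
    rcases hi.eq_or_lt with rfl | hlt
    · refine ⟨fib (m + 1), Nat.fib_pos.2 (by omega), Nat.fib_mono (by omega), ?_⟩
      have hfib : fib (m + 2) + n + fib (m + 1) = fib (m + 3) + n := by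
        rw [Nat.fib_add_two (n := m + 1)]; ring
      rw [hfib]
      exact (fib_add hn).mono (by omega)
    refine ⟨fib (m + 2), hpos, hle, ?_⟩
    rcases (show m + 1 ≤ i from hlt).eq_or_lt with rfl | hlt
    · rw [add_right_comm, add_comm (fib _), fib_add_fib]
      exact (fib_add hn).mono (by omega)
    · rw [add_comm]
      exact .add le_rfl (.add (by omega) hn)

lemma exists_mem_Icc (m j : ℕ) : ∃ n, FibSum m n ∧ j ≤ n ∧ n ≤ j + fib (m + 3) := by
  induction j with
  | zero => exact ⟨0, .zero m, le_rfl, by omega⟩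
  | succ j ih =>
    obtain ⟨n, hn, hjn, hnj⟩ := ih
    rcases hjn.lt_or_eq with hlt | rfl
    · exact ⟨n, hn, hlt, by omega⟩
    · obtain ⟨d, hd1, hd2, hnd⟩ := hn.exists_add
      exact ⟨j + d, hnd, by omega, by omega⟩

end FibSum

section Tent

variable {lam : ℝ}

lemma continuous_tent : Continuous (tent lam) := by
  unfold tent; fun_prop

lemma tent_abs (x : ℝ) : tent lam |x| = tent lam x := by
  simp only [tent, abs_abs]

lemma tentOrbit_zero : tentOrbit lam 0 = 0 := rfl

lemma tentOrbit_add (k n : ℕ) : tentOrbit lam (k + n) = (tent lam)^[k] (tentOrbit lam n) :=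
  Function.iterate_add_apply _ _ _ _

lemma tent_mem_Icc (hlam0 : 0 ≤ lam) (hlam2 : lam ≤ 2) {x : ℝ} (hx : x ∈ Icc (-1 : ℝ) 1) :
    tent lam x ∈ Icc (-1 : ℝ) 1 := by
  have := abs_le.2 ⟨hx.1, hx.2⟩
  constructor <;> unfold tent <;> nlinarith [abs_nonneg x]

lemma tentOrbit_mem_Icc (hlam0 : 0 ≤ lam) (hlam2 : lam ≤ 2) (n : ℕ) :
    tentOrbit lam n ∈ Icc (-1 : ℝ) 1 :=
  (MapsTo.iterate (fun _ => tent_mem_Icc hlam0 hlam2) n) (by norm_num)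

lemma abs_tent_sub_tent (hlam : 0 ≤ lam) {p q : ℝ} (hpq : 0 ≤ p * q) :
    |tent lam p - tent lam q| = lam * |p - q| := by
  have key : tent lam p - tent lam q = lam * (|q| - |p|) := by unfold tent; ring
  rw [key, abs_mul, abs_of_nonneg hlam]
  rcases mul_nonneg_iff.1 hpq with ⟨hp, hq⟩ | ⟨hp, hq⟩
  · rw [abs_of_nonneg hp, abs_of_nonneg hq, abs_sub_comm]
  · rw [abs_of_nonpos hp, abs_of_nonpos hq, show -q - -p = p - q by ring]

lemma tent_mem_uIcc (hlam : 0 ≤ lam) {p q x : ℝ} (hpq : 0 ≤ p * q) (hx : x ∈ uIcc p q) :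
    tent lam x ∈ uIcc (tent lam p) (tent lam q) := by
  rw [mem_uIcc] at hx ⊢
  unfold tent
  rcases mul_nonneg_iff.1 hpq with ⟨hp, hq⟩ | ⟨hp, hq⟩ <;>
    rcases hx with ⟨h1, h2⟩ | ⟨h1, h2⟩
  · rw [abs_of_nonneg hp, abs_of_nonneg hq, abs_of_nonneg (hp.trans h1)]
    right; constructor <;> nlinarith
  · rw [abs_of_nonneg hp, abs_of_nonneg hq, abs_of_nonneg (hq.trans h1)]
    left; constructor <;> nlinarith
  · rw [abs_of_nonpos hp, abs_of_nonpos hq, abs_of_nonpos (h2.trans hq)]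
    left; constructor <;> nlinarith
  · rw [abs_of_nonpos hp, abs_of_nonpos hq, abs_of_nonpos (h2.trans hp)]
    right; constructor <;> nlinarith

lemma iterate_tent_mem_uIcc (hlam : 0 ≤ lam) {p q x : ℝ} (hx : x ∈ uIcc p q) (n : ℕ)
    (hside : ∀ i < n, 0 ≤ (tent lam)^[i] p * (tent lam)^[i] q) :
    (tent lam)^[n] x ∈ uIcc ((tent lam)^[n] p) ((tent lam)^[n] q) := by
  induction n with
  | zero => exact hx
  | succ n ih =>
    simp only [Function.iterate_succ_apply']
    exact tent_mem_uIcc hlam (hside n n.lt_succ_self)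
      (ih fun i hi => hside i (hi.trans n.lt_succ_self))

lemma abs_iterate_tent_sub (hlam : 0 ≤ lam) (p q : ℝ) (n : ℕ)
    (hside : ∀ i < n, 0 ≤ (tent lam)^[i] p * (tent lam)^[i] q) :
    |(tent lam)^[n] p - (tent lam)^[n] q| = lam ^ n * |p - q| := by
  induction n with
  | zero => simp
  | succ n ih =>
    simp only [Function.iterate_succ_apply']
    rw [abs_tent_sub_tent hlam (hside n n.lt_succ_self),
      ih fun i hi => hside i (hi.trans n.lt_succ_self), pow_succ]
    ring

lemma exists_hasDerivAt_tent (hlam : 0 ≤ lam) {u : ℝ} (hu : u ≠ 0) :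
    ∃ d, |d| = lam ∧ HasDerivAt (tent lam) d u := by
  rcases hu.lt_or_gt with hneg | hpos
  · refine ⟨lam, abs_of_nonneg hlam, ?_⟩
    have : HasDerivAt (fun x => lam * (1 + x) - 1) lam u := by
      simpa using ((hasDerivAt_id u).const_add 1).const_mul lam |>.sub_const 1
    refine this.congr_of_eventuallyEq ?_
    filter_upwards [Iio_mem_nhds hneg] with x hx
    simp only [tent, abs_of_neg (show x < 0 from hx), sub_neg_eq_add]
  · refine ⟨-lam, by rw [abs_neg, abs_of_nonneg hlam], ?_⟩
    have : HasDerivAt (fun x => lam * (1 - x) - 1) (-lam) u := by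
      simpa using ((hasDerivAt_id u).const_sub 1).const_mul lam |>.sub_const 1
    refine this.congr_of_eventuallyEq ?_
    filter_upwards [Ioi_mem_nhds hpos] with x hx
    simp only [tent, abs_of_pos (show 0 < x from hx)]

lemma abs_lt_one_of_abs_tent_le (hlam : 0 < lam) {u r : ℝ} (hr : r < 1) (hu : |tent lam u| ≤ r) :
    |u| < 1 := by
  have := (abs_le.1 hu).1
  unfold tent at this
  by_contra h
  nlinarith

lemma ne_zero_of_abs_tent_le {u r : ℝ} (hr : r < lam - 1) (hu : |tent lam u| ≤ r) : u ≠ 0 := by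
  rintro rfl
  have := (abs_le.1 hu).2
  simp only [tent, abs_zero] at this
  linarith

end Tent

/-- Kneading data of the Fibonacci tent map, with `fib (m + 2)` playing the role of `S(m)`. -/
structure FibonacciTent (lam : ℝ) : Prop where
  one_lt : 1 < lam
  orbit_ne_zero : ∀ j, 1 ≤ j → tentOrbit lam j ≠ 0
  same_side : ∀ m j, 1 ≤ j → j < fib (m + 2) →
    (0 < tentOrbit lam (fib (m + 3) + j) ↔ 0 < tentOrbit lam j)
  opposite_side : ∀ m, (0 < tentOrbit lam (fib (m + 4)) ↔ tentOrbit lam (fib (m + 2)) < 0)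
  returnDist_lt : ∀ m, returnDist lam (m + 1) < returnDist lam m

lemma FibonacciTent.of_int {lam : ℝ} (hlam : 1 < lam) {S : ℤ → ℕ}
    (hS : ∀ m : ℕ, S m = fib (m + 2)) (hcne : ∀ j : ℕ, 1 ≤ j → tentOrbit lam j ≠ 0)
    (hsame : ∀ k : ℤ, 2 ≤ k → ∀ j : ℕ, 1 ≤ j → j < S (k - 2) →
      (0 < tentOrbit lam (S (k - 1) + j) ↔ 0 < tentOrbit lam j))
    (hopp : ∀ k : ℤ, 2 ≤ k → (0 < tentOrbit lam (S k) ↔ tentOrbit lam (S (k - 2)) < 0))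
    (hdec : ∀ k : ℤ, 0 ≤ k → |tentOrbit lam (S (k + 1))| < |tentOrbit lam (S k)|) :
    FibonacciTent lam := by
  have hS' (m : ℕ) (k : ℤ) (hk : k = m) : S k = fib (m + 2) := hk ▸ hS m
  refine ⟨hlam, hcne, fun m j hj hjm => ?_, fun m => ?_, fun m => ?_⟩
  · have := hsame (m + 2) (by omega) j hj
    rw [hS' (m + 1) ((m : ℤ) + 2 - 1) (by push_cast; ring), hS' m ((m : ℤ) + 2 - 2) (by ring)]
      at this
    exact this hjm
  · have := hopp (m + 2) (by omega)
    rwa [hS' (m + 2) ((m : ℤ) + 2) (by push_cast; ring), hS' m ((m : ℤ) + 2 - 2) (by ring)] at this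
  · have := hdec m (by omega)
    rwa [hS' (m + 1) ((m : ℤ) + 1) (by push_cast; ring), hS' m (m : ℤ) rfl] at this

namespace FibonacciTent

variable {lam : ℝ} (hF : FibonacciTent lam)
include hF

lemma lam_pos : 0 < lam := one_pos.trans hF.one_lt

lemma returnDist_pos (m : ℕ) : 0 < returnDist lam m :=
  abs_pos.2 (hF.orbit_ne_zero _ (Nat.fib_pos.2 (by omega)))

lemma returnDist_anti : Antitone (returnDist lam) :=
  antitone_nat_of_succ_le fun m => (hF.returnDist_lt m).le

lemma tentOrbit_mul_nonneg (m : ℕ) {i : ℕ} (hi : i < fib (m + 2)) :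
    0 ≤ tentOrbit lam i * tentOrbit lam (fib (m + 3) + i) := by
  rcases Nat.eq_zero_or_pos i with rfl | hi0
  · simp [tentOrbit_zero]
  have hsame := hF.same_side m i hi0 hi
  rcases (hF.orbit_ne_zero i hi0).lt_or_gt with hneg | hpos
  · refine mul_nonneg_of_nonpos_of_nonpos hneg.le (not_lt.1 fun hpos => ?_)
    exact (hsame.1 hpos).not_gt hneg
  · exact mul_nonneg hpos.le (hsame.2 hpos).le

lemma iterate_side (m : ℕ) (i : ℕ) (hi : i < fib (m + 2)) :
    0 ≤ (tent lam)^[i] (tentOrbit lam 0) * (tent lam)^[i] (tentOrbit lam (fib (m + 3))) := by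
  rw [← tentOrbit_add, ← tentOrbit_add, add_zero, add_comm i]
  exact hF.tentOrbit_mul_nonneg m hi

lemma returnDist_add_returnDist (m : ℕ) :
    returnDist lam m + returnDist lam (m + 2) = lam ^ fib (m + 2) * returnDist lam (m + 1) := by
  have hdist := abs_iterate_tent_sub hF.lam_pos.le _ _ _ (hF.iterate_side m)
  rw [← tentOrbit_add, ← tentOrbit_add, add_zero, fib_add_fib, tentOrbit_zero, zero_sub,
    abs_neg] at hdist
  rw [returnDist, returnDist, returnDist, ← hdist]
  have hopp := hF.opposite_side m
  rcases (hF.orbit_ne_zero (fib (m + 2)) (Nat.fib_pos.2 (by omega))).lt_or_gt with hneg | hpos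
  · have := hopp.2 hneg
    rw [abs_of_neg hneg, abs_of_pos this, abs_of_neg (by linarith)]
    ring
  · have : tentOrbit lam (fib (m + 4)) < 0 :=
      (hF.orbit_ne_zero _ (Nat.fib_pos.2 (by omega))).lt_of_le
        (not_lt.1 fun h => (hopp.1 h).not_gt hpos)
    rw [abs_of_pos hpos, abs_of_neg this, abs_of_pos (by linarith)]
    ring

lemma abs_iterate_le_returnDist (m : ℕ) {x : ℝ} (hx : |x| ≤ returnDist lam (m + 1)) :
    |(tent lam)^[fib (m + 2)] x| ≤ returnDist lam m := by
  set q := tentOrbit lam (fib (m + 3))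
  obtain ⟨y, hy, hyx⟩ : ∃ y ∈ uIcc 0 q, |y| = |x| := by
    rcases le_total 0 q with hq | hq
    · exact ⟨|x|, mem_uIcc.2 (Or.inl ⟨abs_nonneg x, hx.trans (abs_of_nonneg hq).le⟩), abs_abs x⟩
    · refine ⟨-|x|, mem_uIcc.2 (Or.inr ⟨?_, by simp⟩), by simp⟩
      have : |x| ≤ -q := hx.trans (abs_of_nonpos hq).le
      linarith
  have hxy : (tent lam)^[fib (m + 2)] x = (tent lam)^[fib (m + 2)] y := by
    obtain ⟨k, hk⟩ : ∃ k, fib (m + 2) = k + 1 := Nat.exists_eq_add_one.2 (Nat.fib_pos.2 (by omega))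
    rw [hk, Function.iterate_succ_apply, Function.iterate_succ_apply, ← tent_abs x, ← hyx, tent_abs]
  have hmem := iterate_tent_mem_uIcc hF.lam_pos.le hy _ (hF.iterate_side m)
  rw [← tentOrbit_add, fib_add_fib] at hmem
  rw [hxy]
  exact abs_le_of_mem_uIcc hmem le_rfl (hF.returnDist_anti (by omega : m ≤ m + 2))

lemma abs_tentOrbit_le {m n : ℕ} (h : FibSum m n) : |tentOrbit lam n| ≤ returnDist lam m := by
  induction h with
  | zero m => rw [tentOrbit_zero, abs_zero]; exact (hF.returnDist_pos m).le
  | @add m i n hi _ ih =>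
    rw [tentOrbit_add]
    have hn : |tentOrbit lam n| ≤ returnDist lam (i + 1) := ih.trans (hF.returnDist_anti (by omega))
    exact (hF.abs_iterate_le_returnDist i hn).trans (hF.returnDist_anti hi)

lemma closure_range_subset_biUnion (m : ℕ) :
    closure (range (tentOrbit lam)) ⊆ ⋃ i ∈ Finset.range (fib (m + 3) + 1),
      (tent lam)^[i] ⁻¹' Icc (-returnDist lam m) (returnDist lam m) := by
  refine closure_minimal ?_ (isClosed_biUnion_finset fun i _ =>
    isClosed_Icc.preimage (continuous_tent.iterate i))
  rintro _ ⟨j, rfl⟩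
  obtain ⟨n, hn, hjn, hnj⟩ := FibSum.exists_mem_Icc m j
  refine mem_biUnion (Finset.mem_range.2 (by omega : n - j < fib (m + 3) + 1)) ?_
  rw [mem_preimage, ← tentOrbit_add, Nat.sub_add_cancel hjn, mem_Icc, ← abs_le]
  exact hF.abs_tentOrbit_le hn

lemma inv_le_measure_Icc {μ : Measure ℝ} [IsProbabilityMeasure μ]
    (hμ : MeasurePreserving (tent lam) μ μ) (hsupp : μ (closure (range (tentOrbit lam)))ᶜ = 0)
    (m : ℕ) :
    ((fib (m + 3) + 1 : ℕ) : ℝ≥0∞)⁻¹ ≤ μ (Icc (-returnDist lam m) (returnDist lam m)) :=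
  inv_natCast_le_measure_of_subset_biUnion hμ hsupp measurableSet_Icc
    (hF.closure_range_subset_biUnion m)

lemma log_returnDist_sub_ge (m : ℕ) (hm : 4 ≤ lam ^ fib (m + 2)) :
    fib (m + 2) * Real.log lam / 2 ≤
      Real.log (returnDist lam m) - Real.log (returnDist lam (m + 1)) := by
  have hb1 := hF.returnDist_pos (m + 1)
  have hratio : (lam ^ fib (m + 2) - 1) * returnDist lam (m + 1) ≤ returnDist lam m := by
    have := hF.returnDist_add_returnDist m
    have := (hF.returnDist_lt (m + 1)).le
    nlinarith
  have hlog := Real.log_le_log (by nlinarith) hratio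
  rw [Real.log_mul (by linarith) hb1.ne'] at hlog
  have := half_log_le_log_sub_one hm
  rw [Real.log_pow] at this
  linarith

lemma ofReal_le_mul_measure_Icc {μ : Measure ℝ} [IsProbabilityMeasure μ]
    (hμ : MeasurePreserving (tent lam) μ μ) (hsupp : μ (closure (range (tentOrbit lam)))ᶜ = 0)
    (m : ℕ) (hm : 4 ≤ lam ^ fib (m + 2)) :
    ENNReal.ofReal (Real.log lam / 8) ≤
      ENNReal.ofReal (Real.log (returnDist lam m) - Real.log (returnDist lam (m + 1))) *
        μ (Icc (-returnDist lam (m + 1)) (returnDist lam (m + 1))) := by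
  set n := fib (m + 2)
  have hn : (0 : ℝ) < n := Nat.cast_pos.2 (Nat.fib_pos.2 (by omega))
  have hμB : ENNReal.ofReal (1 / (4 * n)) ≤
      μ (Icc (-returnDist lam (m + 1)) (returnDist lam (m + 1))) := by
    refine le_trans ?_ (hF.inv_le_measure_Icc hμ hsupp (m + 1))
    rw [one_div, ENNReal.ofReal_inv_of_pos (by positivity)]
    refine ENNReal.inv_le_inv.2 ?_
    rw [← ENNReal.ofReal_natCast]
    exact ENNReal.ofReal_le_ofReal
      (by exact_mod_cast (show fib (m + 1 + 3) + 1 ≤ 4 * n from fib_add_four_add_one_le m))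
  calc ENNReal.ofReal (Real.log lam / 8)
      = ENNReal.ofReal (n * Real.log lam / 2) * ENNReal.ofReal (1 / (4 * n)) := by
        rw [← ENNReal.ofReal_mul (by have := Real.log_pos hF.one_lt; positivity)]
        congr 1
        field_simp
        ring
    _ ≤ _ := mul_le_mul' (ENNReal.ofReal_le_ofReal (hF.log_returnDist_sub_ge m hm)) hμB

lemma tsum_ofReal_mul_measure_Icc_eq_top {μ : Measure ℝ} [IsProbabilityMeasure μ]
    (hμ : MeasurePreserving (tent lam) μ μ) (hsupp : μ (closure (range (tentOrbit lam)))ᶜ = 0) :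
    ∑' m, ENNReal.ofReal (Real.log (returnDist lam m) - Real.log (returnDist lam (m + 1))) *
        μ (Icc (-returnDist lam (m + 1)) (returnDist lam (m + 1))) = ∞ := by
  have hpow : ∀ᶠ m in atTop, 4 ≤ lam ^ fib (m + 2) := by
    filter_upwards [(tendsto_pow_atTop_atTop_of_one_lt hF.one_lt).eventually_ge_atTop 4]
      with m hm
    exact hm.trans (pow_le_pow_right₀ hF.one_lt.le (Nat.fib_add_two_strictMono.id_le m))
  have hε : 0 < ENNReal.ofReal (Real.log lam / 8) :=
    ENNReal.ofReal_pos.2 (by have := Real.log_pos hF.one_lt; positivity)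
  by_contra hne
  obtain ⟨m, hsmall, hm⟩ := ((ENNReal.tendsto_atTop_zero_of_tsum_ne_top hne).eventually
    (gt_mem_nhds hε) |>.and hpow).exists
  exact (hF.ofReal_le_mul_measure_Icc hμ hsupp m hm).not_gt hsmall

lemma lintegral_ofReal_neg_log_abs_eq_top
    {μ : Measure ℝ} [IsProbabilityMeasure μ] (hμ : MeasurePreserving (tent lam) μ μ)
    (hsupp : μ (closure (range (tentOrbit lam)))ᶜ = 0) (hμ0 : μ {0} = 0) :
    ∫⁻ v, ENNReal.ofReal (-Real.log |v|) ∂μ = ∞ :=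
  _root_.lintegral_ofReal_neg_log_abs_eq_top hμ0 hF.returnDist_anti hF.returnDist_pos
    (hF.tsum_ofReal_mul_measure_Icc_eq_top hμ hsupp)

end FibonacciTent

lemma abs_deriv_conj_tent {lam : ℝ} (hlam : 0 < lam) {h h' hinv : ℝ → ℝ}
    (hmono : StrictMonoOn h (Icc (-1 : ℝ) 1)) (hbij : BijOn h (Icc (-1 : ℝ) 1) (Icc (-1 : ℝ) 1))
    (hhd : ∀ x ∈ Icc (-1 : ℝ) 1, HasDerivWithinAt h (h' x) (Icc (-1 : ℝ) 1) x)
    (hinvl : ∀ x ∈ Icc (-1 : ℝ) 1, hinv (h x) = x) (hinvr : ∀ y ∈ Icc (-1 : ℝ) 1, h (hinv y) = y)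
    {u : ℝ} (hu : u ∈ Ioo (-1 : ℝ) 1) (hu0 : u ≠ 0) (hu' : h' u ≠ 0)
    (hTu : tent lam u ∈ Ioo (-1 : ℝ) 1) :
    |deriv (fun y => h (tent lam (hinv y))) (h u)| = |h' (tent lam u)| * lam / |h' u| := by
  have hderiv {x : ℝ} (hx : x ∈ Ioo (-1 : ℝ) 1) : HasDerivAt h (h' x) x :=
    (hhd x (Ioo_subset_Icc_self hx)).hasDerivAt (Icc_mem_nhds hx.1 hx.2)
  have hhu : h u ∈ Ioo (-1 : ℝ) 1 := hmono.mapsTo_Ioo_of_mapsTo_Icc hbij.mapsTo hu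
  have hright : ∀ᶠ y in 𝓝 (h u), h (hinv y) = y :=
    eventually_of_mem (Icc_mem_nhds hhu.1 hhu.2) hinvr
  obtain ⟨d, hd, hT⟩ := exists_hasDerivAt_tent hlam.le hu0
  rw [(HasDerivAt.conjugate (hderiv hu) (hderiv hTu) hT
    (continuousAt_of_leftInvOn_of_strictMonoOn hmono hbij hinvl hu)
    (hinvl u (Ioo_subset_Icc_self hu)) hright hu').deriv, abs_div, abs_mul, hd]

lemma exists_pos_le_abs_of_abs_tent_le {lam : ℝ} {h' : ℝ → ℝ}
    (hC1 : ContinuousOn h' (Icc (-1 : ℝ) 1)) (h'ne : ∀ x ∈ Icc (-1 : ℝ) 1, x ≠ 0 → h' x ≠ 0)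
    {r : ℝ} (hrlam : r < lam - 1) (hr1 : r < 1) :
    ∃ ε > 0, ∀ u, |tent lam u| ≤ r → ε ≤ |h' u| := by
  have hK : ∀ u ∈ {u | |tent lam u| ≤ r}, u ∈ Icc (-1 : ℝ) 1 := fun u hu =>
    have : 0 ≤ r := (abs_nonneg _).trans hu
    abs_le.1 (abs_lt_one_of_abs_tent_le (by linarith) hr1 hu).le
  have hKc : IsCompact {u | |tent lam u| ≤ r} := isCompact_Icc.of_isClosed_subset
    (isClosed_le continuous_tent.abs continuous_const) hK
  exact hKc.exists_forall_le' ((hC1.mono hK).abs)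
    fun u hu => abs_pos.2 (h'ne u (hK u hu) (ne_zero_of_abs_tent_le hrlam hu))

lemma exists_le_neg_log_abs_deriv_conj_tent {lam : ℝ} (hlam : 1 < lam) {h h' hinv : ℝ → ℝ}
    (hmono : StrictMonoOn h (Icc (-1 : ℝ) 1)) (hbij : BijOn h (Icc (-1 : ℝ) 1) (Icc (-1 : ℝ) 1))
    (hhd : ∀ x ∈ Icc (-1 : ℝ) 1, HasDerivWithinAt h (h' x) (Icc (-1 : ℝ) 1) x)
    (hC1 : ContinuousOn h' (Icc (-1 : ℝ) 1))
    (hinvl : ∀ x ∈ Icc (-1 : ℝ) 1, hinv (h x) = x) (hinvr : ∀ y ∈ Icc (-1 : ℝ) 1, h (hinv y) = y)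
    (h'ne : ∀ x ∈ Icc (-1 : ℝ) 1, x ≠ 0 → h' x ≠ 0) {αp αm M δ : ℝ} (hαp : 0 < αp) (hαm : 0 < αm)
    (hδ : 0 < δ)
    (hnfp : ∀ x ∈ Ioo (0 : ℝ) δ, Real.exp (-M) * x ^ αp ≤ h' x ∧ h' x ≤ Real.exp M * x ^ αp)
    (hnfm : ∀ x ∈ Ioo (-δ) (0 : ℝ),
      Real.exp (-M) * |x| ^ αm ≤ h' x ∧ h' x ≤ Real.exp M * |x| ^ αm) :
    ∃ α > 0, ∃ C, ∀ u, α * -Real.log |tent lam u| - C ≤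
      max 0 (-Real.log |deriv (fun y => h (tent lam (hinv y))) (h u)|) := by
  obtain ⟨r, hr0, hr⟩ := exists_between (lt_min hδ (lt_min (sub_pos.2 hlam) one_pos))
  obtain ⟨hrδ, hrlam, hr1⟩ : r < δ ∧ r < lam - 1 ∧ r < 1 := by simpa only [lt_min_iff] using hr
  obtain ⟨ε, hε, hεK⟩ := exists_pos_le_abs_of_abs_tent_le hC1 h'ne hrlam hr1
  set α := min αp αm
  have hα : 0 < α := lt_min hαp hαm
  refine ⟨α, hα, max (M + Real.log lam - Real.log ε) (α * -Real.log r), fun u => ?_⟩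
  by_cases hnear : |tent lam u| ≤ r ∧ tent lam u ≠ 0
  swap
  · refine le_max_of_le_left (sub_nonpos.2 (le_trans ?_ (le_max_right _ _)))
    rcases not_and_or.1 hnear with hfar | hzero
    · exact mul_le_mul_of_nonneg_left (neg_le_neg (Real.log_le_log hr0 (not_le.1 hfar).le)) hα.le
    · rw [not_not.1 hzero, abs_zero, Real.log_zero, neg_zero, mul_zero]
      exact (mul_pos hα (neg_pos.2 (Real.log_neg hr0 hr1))).le
  obtain ⟨hu, hTu0⟩ := hnear
  refine le_max_of_le_right ((sub_le_sub_left (le_max_left _ _) _).trans ?_)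
  have hTu1 : |tent lam u| < 1 := hu.trans_lt hr1
  have hh'u := hεK u hu
  have hh'Tu0 : h' (tent lam u) ≠ 0 := h'ne _ (Ioo_subset_Icc_self (abs_lt.1 hTu1)) hTu0
  rw [abs_deriv_conj_tent (one_pos.trans hlam) hmono hbij hhd hinvl hinvr
      (abs_lt.1 (abs_lt_one_of_abs_tent_le (one_pos.trans hlam) hr1 hu))
      (ne_zero_of_abs_tent_le hrlam hu) (abs_pos.1 (hε.trans_le hh'u)) (abs_lt.1 hTu1),
    Real.log_div (by positivity) (hε.trans_le hh'u).ne',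
    Real.log_mul (abs_pos.2 hh'Tu0).ne' (by linarith)]
  have := log_abs_le_of_nonflat hnfp hnfm hTu0 (hu.trans_lt hrδ) hTu1
  have := Real.log_le_log hε hh'u
  linarith

theorem negative_part_log_deriv_not_integrable_general
    (lam : ℝ) (hlam1 : 1 < lam) (hlam2 : lam ≤ 2)
    (T : ℝ → ℝ) (hT : ∀ x : ℝ, T x = lam * (1 - |x|) - 1)
    (c : ℕ → ℝ) (hc : ∀ i : ℕ, c i = T^[i] 0)
    (S : ℤ → ℕ) (hSm2 : S (-2) = 0) (hSm1 : S (-1) = 1)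
    (hSrec : ∀ k : ℤ, 0 ≤ k → S k = S (k - 1) + S (k - 2))
    (hcne : ∀ j : ℕ, 1 ≤ j → c j ≠ 0)
    (hsame : ∀ k : ℤ, 2 ≤ k → ∀ j : ℕ, 1 ≤ j → j < S (k - 2) →
      (0 < c (S (k - 1) + j) ↔ 0 < c j))
    (hopp : ∀ k : ℤ, 2 ≤ k → (0 < c (S k) ↔ c (S (k - 2)) < 0))
    (hdec : ∀ k : ℤ, 0 ≤ k → |c (S (k + 1))| < |c (S k)|)
    (h : ℝ → ℝ) (h' : ℝ → ℝ) (hinv : ℝ → ℝ)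
    (hmono : StrictMonoOn h (Set.Icc (-1 : ℝ) 1))
    (hbij : Set.BijOn h (Set.Icc (-1 : ℝ) 1) (Set.Icc (-1 : ℝ) 1))
    (hhd : ∀ x ∈ Set.Icc (-1 : ℝ) 1, HasDerivWithinAt h (h' x) (Set.Icc (-1 : ℝ) 1) x)
    (hC1 : ContinuousOn h' (Set.Icc (-1 : ℝ) 1))
    (hinvl : ∀ x ∈ Set.Icc (-1 : ℝ) 1, hinv (h x) = x)
    (hinvr : ∀ y ∈ Set.Icc (-1 : ℝ) 1, h (hinv y) = y)
    (h'ne : ∀ x ∈ Set.Icc (-1 : ℝ) 1, x ≠ 0 → h' x ≠ 0)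
    (αp αm M δ : ℝ) (hαp : 0 < αp) (hαm : 0 < αm)
    (hδ : 0 < δ)
    (hnfp : ∀ x ∈ Set.Ioo (0 : ℝ) δ,
      Real.exp (-M) * x ^ αp ≤ h' x ∧ h' x ≤ Real.exp M * x ^ αp)
    (hnfm : ∀ x ∈ Set.Ioo (-δ) (0 : ℝ),
      Real.exp (-M) * |x| ^ αm ≤ h' x ∧ h' x ≤ Real.exp M * |x| ^ αm)
    (f : ℝ → ℝ) (hfdef : ∀ x : ℝ, f x = h (T (hinv x)))
    (μP : MeasureTheory.Measure ℝ) [MeasureTheory.IsProbabilityMeasure μP]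
    (hinvar : MeasureTheory.Measure.map T μP = μP)
    (hsupp : μP (closure {y : ℝ | ∃ n : ℕ, T^[n] 0 = y})ᶜ = 0)
    (hatom : μP {(0 : ℝ)} = 0) :
    ∫⁻ x, ENNReal.ofReal (max 0 (-(Real.log |deriv f x|))) ∂(MeasureTheory.Measure.map h μP) = ⊤ := by
  obtain rfl : T = tent lam := funext hT
  obtain rfl : c = tentOrbit lam := funext hc
  obtain rfl : f = fun y => h (tent lam (hinv y)) := funext hfdef
  have hF : FibonacciTent lam :=
    .of_int hlam1 (eq_fib_of_rec hSm2 hSm1 hSrec) hcne hsame hopp hdec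
  have hμ : MeasurePreserving (tent lam) μP μP := ⟨continuous_tent.measurable, hinvar⟩
  have hlog := hF.lintegral_ofReal_neg_log_abs_eq_top hμ hsupp hatom
  obtain ⟨α, hα, C, hbound⟩ := exists_le_neg_log_abs_deriv_conj_tent hlam1 hmono hbij hhd hC1
    hinvl hinvr h'ne hαp hαm hδ hnfp hnfm
  have hIcc : μP (Icc (-1 : ℝ) 1)ᶜ = 0 := measure_mono_null (compl_subset_compl.2
    (closure_minimal (range_subset_iff.2 (tentOrbit_mem_Icc (by linarith) hlam2))
      isClosed_Icc)) hsupp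
  have hh : AEMeasurable h μP := by
    rw [← Measure.restrict_eq_self_of_ae_mem (ae_iff.2 hIcc : ∀ᵐ x ∂μP, x ∈ Icc (-1 : ℝ) 1)]
    exact ContinuousOn.aemeasurable (fun x hx => (hhd x hx).continuousWithinAt) measurableSet_Icc
  rw [lintegral_map' (by fun_prop) hh]
  refine top_le_iff.1 ?_
  calc ∞ = ∫⁻ v, ENNReal.ofReal (α * -Real.log |v| - C) ∂μP :=
        (lintegral_ofReal_mul_sub_eq_top hlog hα C).symm
    _ = ∫⁻ u, ENNReal.ofReal (α * -Real.log |tent lam u| - C) ∂μP :=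
        (hμ.lintegral_comp (by fun_prop)).symm
    _ ≤ _ := lintegral_mono fun u => ENNReal.ofReal_le_ofReal (hbound u)

theorem negative_part_log_deriv_not_integrable
    (lam : ℝ) (hlam1 : 1 < lam) (hlam2 : lam ≤ 2)
    (T : ℝ → ℝ) (hT : ∀ x : ℝ, T x = lam * (1 - |x|) - 1)
    (c : ℕ → ℝ) (hc : ∀ i : ℕ, c i = T^[i] 0)
    (S : ℤ → ℕ) (hSm2 : S (-2) = 0) (hSm1 : S (-1) = 1)
    (hSrec : ∀ k : ℤ, 0 ≤ k → S k = S (k - 1) + S (k - 2))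
    (hcne : ∀ j : ℕ, 1 ≤ j → c j ≠ 0)
    (hc2neg : c 2 < 0) (hc1pos : 0 < c 1)
    (hsame : ∀ k : ℤ, 2 ≤ k → ∀ j : ℕ, 1 ≤ j → j < S (k - 2) →
      (0 < c (S (k - 1) + j) ↔ 0 < c j))
    (hopp : ∀ k : ℤ, 2 ≤ k → (0 < c (S k) ↔ c (S (k - 2)) < 0))
    (hdec : ∀ k : ℤ, 0 ≤ k → |c (S (k + 1))| < |c (S k)|)
    (hc34 : |c 3| < |c 4|)
    (h : ℝ → ℝ) (h' : ℝ → ℝ) (hinv : ℝ → ℝ)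
    (hmono : StrictMonoOn h (Set.Icc (-1 : ℝ) 1))
    (hbij : Set.BijOn h (Set.Icc (-1 : ℝ) 1) (Set.Icc (-1 : ℝ) 1))
    (hhd : ∀ x ∈ Set.Icc (-1 : ℝ) 1, HasDerivWithinAt h (h' x) (Set.Icc (-1 : ℝ) 1) x)
    (hC1 : ContinuousOn h' (Set.Icc (-1 : ℝ) 1))
    (hinvl : ∀ x ∈ Set.Icc (-1 : ℝ) 1, hinv (h x) = x)
    (hinvr : ∀ y ∈ Set.Icc (-1 : ℝ) 1, h (hinv y) = y)
    (h'ne : ∀ x ∈ Set.Icc (-1 : ℝ) 1, x ≠ 0 → h' x ≠ 0)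
    (h'0 : h' 0 = 0)
    (αp αm M δ : ℝ) (hαp : 0 < αp) (hαm : 0 < αm) (hM : 0 < M)
    (hδ : 0 < δ) (hδ1 : δ ≤ 1)
    (hnfp : ∀ x ∈ Set.Ioo (0 : ℝ) δ,
      Real.exp (-M) * x ^ αp ≤ h' x ∧ h' x ≤ Real.exp M * x ^ αp)
    (hnfm : ∀ x ∈ Set.Ioo (-δ) (0 : ℝ),
      Real.exp (-M) * |x| ^ αm ≤ h' x ∧ h' x ≤ Real.exp M * |x| ^ αm)
    (f : ℝ → ℝ) (hfdef : ∀ x : ℝ, f x = h (T (hinv x)))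
    (ct : ℝ) (hct : ct = h 0)
    (μP : MeasureTheory.Measure ℝ) [MeasureTheory.IsProbabilityMeasure μP]
    (hinvar : MeasureTheory.Measure.map T μP = μP)
    (hsupp : μP (closure {y : ℝ | ∃ n : ℕ, T^[n] 0 = y})ᶜ = 0)
    (hatom : μP {(0 : ℝ)} = 0) :
    ∫⁻ x, ENNReal.ofReal (max 0 (-(Real.log |deriv f x|))) ∂(MeasureTheory.Measure.map h μP) = ⊤ :=
  negative_part_log_deriv_not_integrable_general lam hlam1 hlam2 T hT c hc S hSm2 hSm1 hSrec hcne
    hsame hopp hdec h h' hinv hmono hbij hhd hC1 hinvl hinvr h'ne αp αm M δ hαp hαm hδ hnfp hnfm f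
    hfdef μP hinvar hsupp hatom
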